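/- Assume Condition 1 holds and 𝔼‖Z‖² < ∞. Then inf over {a : ‖a‖ = 1} of λ_min(S(a)) is strictly positive, and sup over {a : ‖a‖ = 1} of λ_max(S(a)) is finite. (In particular, for each unit vector a the second-moment matrix S(a) of the vector (1, f_t(a),…,f_{t−k₂}(a)) is positive definite, since Condition 1 rules out any deterministic linear relation between f_t(a),…,f_{t−k₂}(a) and a constant.) -/

import Mathlib

open MeasureTheory Filter

noncomputable section

namespace ODPC

variable {Ω : Type*} [MeasurableSpace Ω]

/-- Frobenius norm of a real matrix. -/
def frob {ι κ : Type*} [Fintype ι] [Fintype κ] (M : Matrix ι κ ℝ) : ℝ :=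
  Real.sqrt (∑ i, ∑ j, (M i j) ^ 2)

/-- Smallest eigenvalue of a symmetric real matrix, via the Rayleigh quotient. -/
def lambdaMin {n : ℕ} (M : Matrix (Fin n) (Fin n) ℝ) : ℝ :=
  ⨅ x : { x : EuclideanSpace ℝ (Fin n) // ‖x‖ = 1 }, ∑ i, ∑ j, x.1 i * M i j * x.1 j

/-- Largest eigenvalue of a symmetric real matrix, via the Rayleigh quotient. -/
def lambdaMax {n : ℕ} (M : Matrix (Fin n) (Fin n) ℝ) : ℝ :=
  ⨆ x : { x : EuclideanSpace ℝ (Fin n) // ‖x‖ = 1 }, ∑ i, ∑ j, x.1 i * M i j * x.1 j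

variable (m k₁ k₂ : ℕ)

/-- The stationary process `z_t = Z ∘ τ^t`. -/
def zproc (Z : Ω → EuclideanSpace ℝ (Fin m)) (τ : Ω → Ω) (t : ℕ) (ω : Ω) :
    EuclideanSpace ℝ (Fin m) := Z (τ^[t] ω)

/-- The one-sided dynamic principal component `f_t(a) = a'x_t`,
where `x_t = (z_t', …, z_{t-k₁}')`. -/
def comp (Z : Ω → EuclideanSpace ℝ (Fin m)) (τ : Ω → Ω)
    (a : EuclideanSpace ℝ (Fin (k₁ + 1) × Fin m)) (t : ℕ) (ω : Ω) : ℝ :=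
  ∑ h : Fin (k₁ + 1), ∑ j : Fin m, a (h, j) * zproc m Z τ (t - h.1) ω j

/-- Reconstruction `z_t^R(a,D)`: the first row of `D` is the intercept `α`, the
remaining rows are the loadings `B`. -/
def recon (Z : Ω → EuclideanSpace ℝ (Fin m)) (τ : Ω → Ω)
    (a : EuclideanSpace ℝ (Fin (k₁ + 1) × Fin m))
    (D : Matrix (Fin (k₂ + 2)) (Fin m) ℝ) (t : ℕ) (ω : Ω) :
    EuclideanSpace ℝ (Fin m) :=
  (WithLp.equiv 2 (Fin m → ℝ)).symm fun j =>
    D 0 j + ∑ h : Fin (k₂ + 1), D h.succ j * comp m k₁ Z τ a (t - h.1) ω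

/-- Population mean squared reconstruction error `MSE₀(a,D)`. -/
def MSE₀ (μ : Measure Ω) (Z : Ω → EuclideanSpace ℝ (Fin m)) (τ : Ω → Ω)
    (a : EuclideanSpace ℝ (Fin (k₁ + 1) × Fin m))
    (D : Matrix (Fin (k₂ + 2)) (Fin m) ℝ) : ℝ :=
  ∫ ω, ‖zproc m Z τ (k₁ + k₂) ω - recon m k₁ k₂ Z τ a D (k₁ + k₂) ω‖ ^ 2 ∂μ

/-- Sample mean squared reconstruction error `MSE_T(a,D)`. -/
def MSE (Z : Ω → EuclideanSpace ℝ (Fin m)) (τ : Ω → Ω) (T : ℕ)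
    (a : EuclideanSpace ℝ (Fin (k₁ + 1) × Fin m))
    (D : Matrix (Fin (k₂ + 2)) (Fin m) ℝ) (ω : Ω) : ℝ :=
  ((T : ℝ) - (k₁ + k₂))⁻¹ *
    ∑ t ∈ Finset.Ioc (k₁ + k₂) T,
      ‖zproc m Z τ t ω - recon m k₁ k₂ Z τ a D t ω‖ ^ 2

/-- Condition 1: no deterministic linear relation between `f_t(a), …, f_{t-k₂}(a)`
and a constant, uniformly over unit vectors `a`. -/
def Condition1 (μ : Measure Ω) (Z : Ω → EuclideanSpace ℝ (Fin m)) (τ : Ω → Ω) : Prop :=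
  ∃ η : ℝ, η < 1 ∧
    ∀ a : EuclideanSpace ℝ (Fin (k₁ + 1) × Fin m), ‖a‖ = 1 →
      ∀ v : Fin (k₂ + 2) → ℝ, v ≠ 0 →
        (μ {ω | ∑ h : Fin (k₂ + 1),
            v h.castSucc * comp m k₁ Z τ a (k₁ + k₂ - h.1) ω
              = v (Fin.last (k₂ + 1))}).toReal ≤ η

/-- The row `w_t(a) = (1, f_t(a), f_{t-1}(a), …, f_{t-k₂}(a))`. -/
def wvec (Z : Ω → EuclideanSpace ℝ (Fin m)) (τ : Ω → Ω)
    (a : EuclideanSpace ℝ (Fin (k₁ + 1) × Fin m)) (t : ℕ) (i : Fin (k₂ + 2)) (ω : Ω) : ℝ :=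
  if i.1 = 0 then 1 else comp m k₁ Z τ a (t - (i.1 - 1)) ω

/-- The population second-moment matrix `S(a) = 𝔼[w_t(a) w_t(a)']`. -/
def Smat (μ : Measure Ω) (Z : Ω → EuclideanSpace ℝ (Fin m)) (τ : Ω → Ω)
    (a : EuclideanSpace ℝ (Fin (k₁ + 1) × Fin m)) :
    Matrix (Fin (k₂ + 2)) (Fin (k₂ + 2)) ℝ :=
  fun i i' => ∫ ω, wvec m k₁ k₂ Z τ a (k₁ + k₂) i ω * wvec m k₁ k₂ Z τ a (k₁ + k₂) i' ω ∂μ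

/-- The sample second-moment matrix `F_{k₁,k₂}(a)'F_{k₁,k₂}(a)/(T-(k₁+k₂))`. -/
def Ssamp (Z : Ω → EuclideanSpace ℝ (Fin m)) (τ : Ω → Ω) (T : ℕ)
    (a : EuclideanSpace ℝ (Fin (k₁ + 1) × Fin m)) (ω : Ω) :
    Matrix (Fin (k₂ + 2)) (Fin (k₂ + 2)) ℝ :=
  fun i i' => ((T : ℝ) - (k₁ + k₂))⁻¹ *
    ∑ t ∈ Finset.Ioc (k₁ + k₂) T, wvec m k₁ k₂ Z τ a t i ω * wvec m k₁ k₂ Z τ a t i' ω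

/-- The set `𝓘` of minimizers of the population MSE. -/
def minimizers (μ : Measure Ω) (Z : Ω → EuclideanSpace ℝ (Fin m)) (τ : Ω → Ω) :
    Set ((EuclideanSpace ℝ (Fin (k₁ + 1) × Fin m)) × Matrix (Fin (k₂ + 2)) (Fin m) ℝ) :=
  {p | ‖p.1‖ = 1 ∧ ∀ a D, ‖a‖ = 1 → MSE₀ m k₁ k₂ μ Z τ p.1 p.2 ≤ MSE₀ m k₁ k₂ μ Z τ a D}

/-- The distance `d((a,D), 𝓘)`. -/
def distToMinimizers (μ : Measure Ω) (Z : Ω → EuclideanSpace ℝ (Fin m)) (τ : Ω → Ω)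
    (a : EuclideanSpace ℝ (Fin (k₁ + 1) × Fin m))
    (D : Matrix (Fin (k₂ + 2)) (Fin m) ℝ) : ℝ :=
  ⨅ p : minimizers m k₁ k₂ μ Z τ, (‖a - p.1.1‖ + frob (D - p.1.2))

/-!
A unit vector `v` with `v'S(a)v = 𝔼[(v'w_t(a))²] = 0` would make `v'w_t(a) = 0` almost surely,
a deterministic affine relation between `f_t(a), …, f_{t-k₂}(a)` that Condition 1 forbids. Hence
the Rayleigh quotient `(a, v) ↦ v'S(a)v` is positive on the product of the two unit spheres. It is
also continuous there, because the entries of `S(a)` are quadratic polynomials in `a` whose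
coefficients are second moments of `z`; by compactness it is bounded below by a positive constant
and bounded above.
-/

theorem integral_sum_mul_sum {ι κ : Type*} [Fintype ι] [Fintype κ] {μ : Measure Ω}
    (c : ι → ℝ) (d : κ → ℝ) {f : ι → Ω → ℝ} {g : κ → Ω → ℝ}
    (hf : ∀ i, MemLp (f i) 2 μ) (hg : ∀ j, MemLp (g j) 2 μ) :
    ∫ ω, (∑ i, c i * f i ω) * (∑ j, d j * g j ω) ∂μ
      = ∑ i, ∑ j, c i * d j * ∫ ω, f i ω * g j ω ∂μ := by
  have hint : ∀ i j, Integrable (fun ω => f i ω * g j ω) μ := fun i j =>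
    (hf i).integrable_mul (hg j)
  simp_rw [Finset.sum_mul_sum, mul_mul_mul_comm]
  rw [integral_finsetSum _ fun i _ => integrable_finsetSum _ fun j _ => (hint i j).const_mul _]
  refine Finset.sum_congr rfl fun i _ => ?_
  rw [integral_finsetSum _ fun j _ => (hint i j).const_mul _]
  simp_rw [integral_const_mul]

theorem continuous_integral_sum_mul_sum {X ι κ : Type*} [TopologicalSpace X] [Fintype ι]
    [Fintype κ] {μ : Measure Ω} {c : X → ι → ℝ} {d : X → κ → ℝ} (hc : Continuous c)
    (hd : Continuous d) {f : ι → Ω → ℝ} {g : κ → Ω → ℝ}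
    (hf : ∀ i, MemLp (f i) 2 μ) (hg : ∀ j, MemLp (g j) 2 μ) :
    Continuous fun x => ∫ ω, (∑ i, c x i * f i ω) * (∑ j, d x j * g j ω) ∂μ := by
  simp_rw [integral_sum_mul_sum _ _ hf hg]
  fun_prop

theorem nonempty_norm_eq_one {E : Type*} [NormedAddCommGroup E] [NormedSpace ℝ E] [Nontrivial E] :
    Nonempty { a : E // ‖a‖ = 1 } :=
  let ⟨a, ha⟩ := (NormedSpace.sphere_nonempty (x := (0 : E))).mpr zero_le_one
  ⟨⟨a, mem_sphere_zero_iff_norm.mp ha⟩⟩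

theorem compactSpace_norm_eq_one {E : Type*} [NormedAddCommGroup E] [ProperSpace E] :
    CompactSpace { a : E // ‖a‖ = 1 } :=
  (isCompact_iff_compactSpace (s := {a | ‖a‖ = 1})).mp <| by
    simpa only [Metric.sphere, dist_zero_right] using isCompact_sphere (0 : E) 1

def rayleigh {n : ℕ} (M : Matrix (Fin n) (Fin n) ℝ) (x : EuclideanSpace ℝ (Fin n)) : ℝ :=
  ∑ i, ∑ j, x i * M i j * x j

theorem continuous_rayleigh {X : Type*} [TopologicalSpace X] {n : ℕ}
    {M : X → Matrix (Fin n) (Fin n) ℝ} (hM : Continuous M) :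
    Continuous fun p : X × EuclideanSpace ℝ (Fin n) => rayleigh (M p.1) p.2 := by
  unfold rayleigh
  fun_prop

theorem pos_iInf_lambdaMin {X : Type*} [TopologicalSpace X] [CompactSpace X] [Nonempty X]
    {n : ℕ} [NeZero n] {M : X → Matrix (Fin n) (Fin n) ℝ} (hM : Continuous M)
    (hpos : ∀ x v, ‖v‖ = 1 → 0 < rayleigh (M x) v) :
    0 < ⨅ x, lambdaMin (M x) := by
  have hK := (isCompact_univ (X := X)).prod (isCompact_sphere (0 : EuclideanSpace ℝ (Fin n)) 1)
  obtain ⟨⟨x, v⟩, ⟨-, hv⟩, hmin⟩ := hK.exists_isMinOn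
    (Set.univ_nonempty.prod (NormedSpace.sphere_nonempty.mpr zero_le_one))
    (continuous_rayleigh hM).continuousOn
  have : Nonempty { v : EuclideanSpace ℝ (Fin n) // ‖v‖ = 1 } := nonempty_norm_eq_one
  have hle : ∀ y, rayleigh (M x) v ≤ lambdaMin (M y) := fun y =>
    le_ciInf fun w => isMinOn_iff.mp hmin (y, w.1) ⟨trivial, mem_sphere_zero_iff_norm.mpr w.2⟩
  exact (hpos x v (mem_sphere_zero_iff_norm.mp hv)).trans_le (le_ciInf hle)

theorem bddAbove_range_lambdaMax {X : Type*} [TopologicalSpace X] [CompactSpace X] {n : ℕ}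
    {M : X → Matrix (Fin n) (Fin n) ℝ} (hM : Continuous M) :
    BddAbove (Set.range fun x => lambdaMax (M x)) := by
  obtain ⟨C, hC⟩ := (isCompact_univ.prod (isCompact_sphere 0 1)).bddAbove_image
    (continuous_rayleigh hM).continuousOn
  refine ⟨max C 0, ?_⟩
  rintro _ ⟨x, rfl⟩
  refine Real.iSup_le (fun v => le_max_of_le_left (hC ⟨(x, v.1), ⟨trivial, ?_⟩, rfl⟩))
    (le_max_right _ _)
  exact mem_sphere_zero_iff_norm.mpr v.2

section SecondMomentMatrix

variable {μ : Measure Ω} {τ : Ω → Ω} {Z : Ω → EuclideanSpace ℝ (Fin m)}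

theorem memLp_zproc_apply (hτ : MeasurePreserving τ μ μ) (hZ : MemLp Z 2 μ) (t : ℕ)
    (j : Fin m) : MemLp (fun ω => zproc m Z τ t ω j) 2 μ :=
  (EuclideanSpace.proj j (𝕜 := ℝ)).comp_memLp' (hZ.comp_measurePreserving (hτ.iterate t))

/-- Writes `w_t(a)` as a linear combination of fixed functions with coefficients `1` (index
`none`) and the coordinates `a q` (index `some q`); see `wvec_eq_sum`. -/
def wvecBasis (Z : Ω → EuclideanSpace ℝ (Fin m)) (τ : Ω → Ω) (t : ℕ) (i : Fin (k₂ + 2)) :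
    Option (Fin (k₁ + 1) × Fin m) → Ω → ℝ
  | none => fun _ => if i.1 = 0 then 1 else 0
  | some q => if i.1 = 0 then 0 else fun ω => zproc m Z τ (t - (i.1 - 1) - q.1.1) ω q.2

omit [MeasurableSpace Ω] in
theorem wvec_eq_sum (a : EuclideanSpace ℝ (Fin (k₁ + 1) × Fin m)) (t : ℕ) (i : Fin (k₂ + 2))
    (ω : Ω) :
    wvec m k₁ k₂ Z τ a t i ω
      = ∑ p, p.elim 1 (fun q => a q) * wvecBasis m k₁ k₂ Z τ t i p ω := by
  rw [Fintype.sum_option, wvec, comp, ← Fintype.sum_prod_type']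
  by_cases hi : i.1 = 0 <;> simp [wvecBasis, hi]

theorem memLp_wvecBasis [IsFiniteMeasure μ] (hτ : MeasurePreserving τ μ μ) (hZ : MemLp Z 2 μ)
    (t : ℕ) (i : Fin (k₂ + 2)) (p : Option (Fin (k₁ + 1) × Fin m)) :
    MemLp (wvecBasis m k₁ k₂ Z τ t i p) 2 μ := by
  rcases p with _ | q
  · exact memLp_const _
  · unfold wvecBasis
    split_ifs
    · exact MemLp.zero
    · exact memLp_zproc_apply m hτ hZ _ _

theorem memLp_wvec [IsFiniteMeasure μ] (hτ : MeasurePreserving τ μ μ) (hZ : MemLp Z 2 μ)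
    (a : EuclideanSpace ℝ (Fin (k₁ + 1) × Fin m)) (t : ℕ) (i : Fin (k₂ + 2)) :
    MemLp (fun ω => wvec m k₁ k₂ Z τ a t i ω) 2 μ := by
  simp_rw [wvec_eq_sum]
  exact memLp_finsetSum _ fun p _ => (memLp_wvecBasis m k₁ k₂ hτ hZ t i p).const_mul _

theorem continuous_Smat [IsFiniteMeasure μ] (hτ : MeasurePreserving τ μ μ) (hZ : MemLp Z 2 μ) :
    Continuous fun a => Smat m k₁ k₂ μ Z τ a := by
  have hcoef : Continuous fun (a : EuclideanSpace ℝ (Fin (k₁ + 1) × Fin m))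
      (p : Option (Fin (k₁ + 1) × Fin m)) => p.elim 1 fun q => a q := by
    refine continuous_pi fun p => ?_
    rcases p with _ | q
    · exact continuous_const
    · exact (EuclideanSpace.proj q).continuous
  refine continuous_pi fun i => continuous_pi fun j => ?_
  simp_rw [Smat, wvec_eq_sum]
  exact continuous_integral_sum_mul_sum hcoef hcoef (memLp_wvecBasis m k₁ k₂ hτ hZ _ i)
    (memLp_wvecBasis m k₁ k₂ hτ hZ _ j)

theorem rayleigh_Smat [IsFiniteMeasure μ] (hτ : MeasurePreserving τ μ μ) (hZ : MemLp Z 2 μ)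
    (a : EuclideanSpace ℝ (Fin (k₁ + 1) × Fin m)) (v : EuclideanSpace ℝ (Fin (k₂ + 2))) :
    rayleigh (Smat m k₁ k₂ μ Z τ a) v
      = ∫ ω, (∑ i, v i * wvec m k₁ k₂ Z τ a (k₁ + k₂) i ω) ^ 2 ∂μ := by
  simp_rw [sq]
  rw [integral_sum_mul_sum _ _ (memLp_wvec m k₁ k₂ hτ hZ a _) (memLp_wvec m k₁ k₂ hτ hZ a _)]
  refine Finset.sum_congr rfl fun i _ => Finset.sum_congr rfl fun j _ => ?_
  rw [Smat]
  ring

omit [MeasurableSpace Ω] in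
theorem sum_mul_wvec (a : EuclideanSpace ℝ (Fin (k₁ + 1) × Fin m)) (t : ℕ)
    (v : Fin (k₂ + 2) → ℝ) (ω : Ω) :
    ∑ i, v i * wvec m k₁ k₂ Z τ a t i ω
      = v 0 + ∑ h : Fin (k₂ + 1), v h.succ * comp m k₁ Z τ a (t - h) ω := by
  simp [Fin.sum_univ_succ, wvec]

theorem Condition1.not_ae_sum_mul_wvec_eq_zero [IsProbabilityMeasure μ]
    (hcond : Condition1 m k₁ k₂ μ Z τ) {a : EuclideanSpace ℝ (Fin (k₁ + 1) × Fin m)}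
    (ha : ‖a‖ = 1) {v : Fin (k₂ + 2) → ℝ} (hv : v ≠ 0) :
    ¬ ∀ᵐ ω ∂μ, ∑ i, v i * wvec m k₁ k₂ Z τ a (k₁ + k₂) i ω = 0 := by
  intro hae
  obtain ⟨η, hη, hC⟩ := hcond
  -- `v 0 + ∑ h, v h.succ * f_{t-h} = 0` rewritten in the shape used by Condition 1
  set v' : Fin (k₂ + 2) → ℝ := Fin.snoc (fun h : Fin (k₂ + 1) => v h.succ) (-v 0)
  have hv' : v' ≠ 0 := by
    refine fun h0 => hv (funext fun i => ?_)
    refine Fin.cases ?_ (fun h => ?_) i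
    · simpa [v'] using congrFun h0 (Fin.last _)
    · simpa [v'] using congrFun h0 h.castSucc
  have hfull : μ {ω | ∑ h : Fin (k₂ + 1), v' h.castSucc * comp m k₁ Z τ a (k₁ + k₂ - h.1) ω
      = v' (Fin.last (k₂ + 1))} = 1 := by
    rw [← measure_univ (μ := μ)]
    refine measure_congr (ae_eq_univ.mpr (ae_iff.mp (hae.mono fun ω hω => ?_)))
    rw [sum_mul_wvec] at hω
    simp only [Set.mem_ofPred_eq, v', Fin.snoc_castSucc, Fin.snoc_last]
    linarith
  have := hC a ha v' hv'
  rw [hfull, ENNReal.toReal_one] at this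
  linarith

theorem rayleigh_Smat_pos [IsProbabilityMeasure μ] (hτ : MeasurePreserving τ μ μ)
    (hZ : MemLp Z 2 μ) (hcond : Condition1 m k₁ k₂ μ Z τ)
    {a : EuclideanSpace ℝ (Fin (k₁ + 1) × Fin m)} (ha : ‖a‖ = 1)
    {v : EuclideanSpace ℝ (Fin (k₂ + 2))} (hv : v ≠ 0) :
    0 < rayleigh (Smat m k₁ k₂ μ Z τ a) v := by
  rw [rayleigh_Smat m k₁ k₂ hτ hZ]
  have hmem : MemLp (fun ω => ∑ i, v i * wvec m k₁ k₂ Z τ a (k₁ + k₂) i ω) 2 μ :=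
    memLp_finsetSum _ fun i _ => (memLp_wvec m k₁ k₂ hτ hZ a _ i).const_mul _
  refine (integral_nonneg fun ω => sq_nonneg _).lt_of_ne fun h0 => ?_
  have hae := (integral_eq_zero_iff_of_nonneg (fun ω => sq_nonneg _) hmem.integrable_sq).mp
    h0.symm
  refine hcond.not_ae_sum_mul_wvec_eq_zero m k₁ k₂ ha (v := ⇑v) ?_
    (hae.mono fun ω hω => pow_eq_zero_iff two_ne_zero |>.mp hω)
  exact fun h => hv (WithLp.ofLp_injective 2 (by simpa using h))

end SecondMomentMatrix

variable (μ : Measure Ω) [IsProbabilityMeasure μ]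

theorem stmt15 (hm : 0 < m) (τ : Ω → Ω) (hτ : MeasurePreserving τ μ μ)
    (Z : Ω → EuclideanSpace ℝ (Fin m)) (hZ : MemLp Z 2 μ)
    (hcond : Condition1 m k₁ k₂ μ Z τ) :
    (0 < ⨅ a : { a : EuclideanSpace ℝ (Fin (k₁ + 1) × Fin m) // ‖a‖ = 1 },
        lambdaMin (Smat m k₁ k₂ μ Z τ a.1)) ∧
    BddAbove (Set.range
      (fun a : { a : EuclideanSpace ℝ (Fin (k₁ + 1) × Fin m) // ‖a‖ = 1 } =>
        lambdaMax (Smat m k₁ k₂ μ Z τ a.1))) := by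
  have : NeZero m := ⟨hm.ne'⟩
  have : CompactSpace { a : EuclideanSpace ℝ (Fin (k₁ + 1) × Fin m) // ‖a‖ = 1 } :=
    compactSpace_norm_eq_one
  have : Nonempty { a : EuclideanSpace ℝ (Fin (k₁ + 1) × Fin m) // ‖a‖ = 1 } :=
    nonempty_norm_eq_one
  have hS : Continuous fun a : { a : EuclideanSpace ℝ (Fin (k₁ + 1) × Fin m) // ‖a‖ = 1 } =>
      Smat m k₁ k₂ μ Z τ a.1 :=
    (continuous_Smat m k₁ k₂ hτ hZ).comp continuous_subtype_val
  refine ⟨pos_iInf_lambdaMin hS fun a v hv => ?_, bddAbove_range_lambdaMax hS⟩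
  exact rayleigh_Smat_pos m k₁ k₂ hτ hZ hcond a.2 (norm_ne_zero_iff.mp (hv ▸ one_ne_zero))

end ODPC
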